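/- Let n ≥ 1 and let R ⊆ ℝ^n be a nonempty open connected set. Suppose there exists a continuous function δ : R → ℝ such that (i) 0 < δ(x) ≤ dist(x, ℝ^n ∖ R) for every x ∈ R, and (ii) for every pair of points p, q ∈ R whose closed line segment [p,q] is contained in R, the function t ↦ −log δ((1−t)p + tq) is convex on [0,1]. Then R is convex. (Key convexity claim underlying the proofs of the tube theorems: log-concavity of a positive minorant of the boundary distance along contained segments forces convexity.) -/

import Mathlib

/-!
Fix `p ∈ R` and let `T` be the set of points `q` with `[p, q] ⊆ R`. Since `R` is open and
segments are compact, `T` is open. Convexity of `-log δ` along `[p, q]` bounds `δ`, and hence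
the distance to `Rᶜ`, below by `min (δ p) (δ q)` on the segment. This bound passes to the limit
at any `y ∈ R ∩ closure T` by continuity of `δ` at `y`, which keeps `[p, y]` inside `R`. So `T`
is relatively clopen in the connected set `R`, hence `T = R`.
-/

open Set Filter Topology Metric

theorem min_le_of_convexOn_neg_log {E : Type*} [AddCommGroup E] [Module ℝ E] {s : Set E}
    {g : E → ℝ} (hg : ConvexOn ℝ s fun x => -Real.log (g x)) {x y z : E} (hx : x ∈ s)
    (hy : y ∈ s) (hz : z ∈ segment ℝ x y) (hgx : 0 < g x) (hgy : 0 < g y) (hgz : 0 < g z) :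
    min (g x) (g y) ≤ g z := by
  rcases le_max_iff.1 (hg.le_on_segment hx hy hz) with h | h
  · exact min_le_of_left_le ((Real.log_le_log_iff hgx hgz).1 (neg_le_neg_iff.1 h))
  · exact min_le_of_right_le ((Real.log_le_log_iff hgy hgz).1 (neg_le_neg_iff.1 h))

theorem isOpen_setOf_segment_subset {E : Type*} [AddCommGroup E] [Module ℝ E]
    [TopologicalSpace E] [ContinuousAdd E] [ContinuousSMul ℝ E] {R : Set E} (hR : IsOpen R)
    (p : E) : IsOpen {q | segment ℝ p q ⊆ R} := by
  simp only [segment_eq_image, image_subset_iff]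
  refine isOpen_iff_mem_nhds.2 fun q hq => isCompact_Icc.eventually_forall_of_forall_eventually
    fun t ht => ?_
  have hcont : Continuous fun z : E × ℝ => (1 - z.2) • p + z.2 • z.1 := by fun_prop
  exact hcont.continuousAt.eventually (hR.mem_nhds (hq ht))

section DistanceMinorant

variable {E : Type*} [NormedAddCommGroup E] [NormedSpace ℝ E] {R : Set E} {δ : E → ℝ}

theorem ofReal_min_le_infEDist_of_segment_subset (hδpos : ∀ x ∈ R, 0 < δ x)
    (hδle : ∀ x ∈ R, ENNReal.ofReal (δ x) ≤ infEDist x Rᶜ) {p q : E}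
    (hconv : ConvexOn ℝ (Icc (0 : ℝ) 1) fun t : ℝ => -Real.log (δ ((1 - t) • p + t • q)))
    (hpq : segment ℝ p q ⊆ R) {x : E} (hx : x ∈ segment ℝ p q) :
    ENNReal.ofReal (min (δ p) (δ q)) ≤ infEDist x Rᶜ := by
  have hxR := hpq hx
  rw [segment_eq_image] at hx
  obtain ⟨t, ht, rfl⟩ := hx
  have h01 : (0 : ℝ) ≤ 1 := zero_le_one
  have hmin := min_le_of_convexOn_neg_log hconv (left_mem_Icc.2 h01) (right_mem_Icc.2 h01)
    (segment_eq_Icc h01 ▸ ht)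
    (by simpa using hδpos p (hpq (left_mem_segment ℝ p q)))
    (by simpa using hδpos q (hpq (right_mem_segment ℝ p q))) (hδpos _ hxR)
  simp only [sub_zero, one_smul, zero_smul, add_zero, sub_self, zero_add] at hmin
  exact (ENNReal.ofReal_le_ofReal hmin).trans (hδle _ hxR)

theorem segment_subset_of_mem_closure (hRopen : IsOpen R) (hδcont : ContinuousOn δ R)
    (hδpos : ∀ x ∈ R, 0 < δ x) (hδle : ∀ x ∈ R, ENNReal.ofReal (δ x) ≤ infEDist x Rᶜ)
    {p : E} (hp : p ∈ R) (hconv : ∀ q ∈ R, segment ℝ p q ⊆ R →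
      ConvexOn ℝ (Icc (0 : ℝ) 1) fun t : ℝ => -Real.log (δ ((1 - t) • p + t • q)))
    {y : E} (hy : y ∈ closure {q | segment ℝ p q ⊆ R}) (hyR : y ∈ R) :
    segment ℝ p y ⊆ R := by
  rw [segment_eq_image, image_subset_iff]
  intro t ht
  have := mem_closure_iff_nhdsWithin_neBot.1 hy
  have hbound : ENNReal.ofReal (min (δ p) (δ y)) ≤ infEDist ((1 - t) • p + t • y) Rᶜ := by
    refine le_of_tendsto_of_tendsto (b := 𝓝[{q | segment ℝ p q ⊆ R}] y)
      (f := fun z => ENNReal.ofReal (min (δ p) (δ z)))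
      (g := fun z => infEDist ((1 - t) • p + t • z) Rᶜ) ?_ ?_
      (eventually_nhdsWithin_of_forall fun q hq => ?_)
    · have hδy := hδcont.continuousAt (hRopen.mem_nhds hyR)
      exact (ENNReal.continuous_ofReal.continuousAt.comp
        (continuousAt_const.min hδy)).tendsto.mono_left nhdsWithin_le_nhds
    · exact ((continuous_infEDist.comp (by fun_prop)).tendsto y).mono_left nhdsWithin_le_nhds
    · exact ofReal_min_le_infEDist_of_segment_subset hδpos hδle
        (hconv q (hq (right_mem_segment ℝ p q)) hq) hq
        (segment_eq_image ℝ p q ▸ mem_image_of_mem _ ht)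
  by_contra hout
  rw [infEDist_zero_of_mem hout, nonpos_iff_eq_zero, ENNReal.ofReal_eq_zero] at hbound
  exact hbound.not_gt (lt_min (hδpos p hp) (hδpos y hyR))

end DistanceMinorant

theorem convex_of_logConcave_minorant_general (n : ℕ)
    (R : Set (EuclideanSpace ℝ (Fin n)))
    (hRopen : IsOpen R) (hRconn : IsConnected R)
    (δ : EuclideanSpace ℝ (Fin n) → ℝ) (hδcont : ContinuousOn δ R)
    (hδpos : ∀ x ∈ R, 0 < δ x)
    (hδle : ∀ x ∈ R, ENNReal.ofReal (δ x) ≤ EMetric.infEdist x Rᶜ)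
    (hconv : ∀ p ∈ R, ∀ q ∈ R, segment ℝ p q ⊆ R →
      ConvexOn ℝ (Set.Icc (0 : ℝ) 1)
        (fun t : ℝ => -Real.log (δ ((1 - t) • p + t • q)))) :
    Convex ℝ R := by
  refine convex_iff_segment_subset.2 fun p hp q hq => ?_
  have hT : R ⊆ {q | segment ℝ p q ⊆ R} :=
    hRconn.isPreconnected.subset_of_closure_inter_subset (isOpen_setOf_segment_subset hRopen p)
      ⟨p, hp, by simpa [segment_same] using hp⟩
      fun y ⟨hy, hyR⟩ =>
        segment_subset_of_mem_closure hRopen hδcont hδpos hδle hp (hconv p hp) hy hyR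
  exact hT hq

/-- Key convexity claim underlying the proofs of the tube theorems: if a
nonempty open connected set `R ⊆ ℝⁿ` carries a continuous function
`δ : R → ℝ` with `0 < δ(x) ≤ dist(x, ℝⁿ \ R)` (the distance being `+∞` when
`R = ℝⁿ`, which is captured by `EMetric.infEdist`), such that
`t ↦ -log δ((1-t)p + tq)` is convex on `[0,1]` for every segment
`[p,q] ⊆ R`, then `R` is convex. -/
theorem convex_of_logConcave_minorant (n : ℕ) (hn : 1 ≤ n)
    (R : Set (EuclideanSpace ℝ (Fin n)))
    (hRne : R.Nonempty) (hRopen : IsOpen R) (hRconn : IsConnected R)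
    (δ : EuclideanSpace ℝ (Fin n) → ℝ) (hδcont : ContinuousOn δ R)
    (hδpos : ∀ x ∈ R, 0 < δ x)
    (hδle : ∀ x ∈ R, ENNReal.ofReal (δ x) ≤ EMetric.infEdist x Rᶜ)
    (hconv : ∀ p ∈ R, ∀ q ∈ R, segment ℝ p q ⊆ R →
      ConvexOn ℝ (Set.Icc (0 : ℝ) 1)
        (fun t : ℝ => -Real.log (δ ((1 - t) • p + t • q)))) :
    Convex ℝ R :=
  convex_of_logConcave_minorant_general n R hRopen hRconn δ hδcont hδpos hδle hconv
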